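/- arXiv:2211.02257 — 3 statements merged into one kernel-verified Lean document; each statement's English description precedes it below -/
import Mathlib

section
/- For any Boolean function f : {0,1}^n → {0,1}, the total influence satisfies Inf(f) ≤ 4 · Var(f) · Cert(f). -/
/-!
Let `s(x)` be the number of coordinates `i` with `f (x ⊕ eᵢ) ≠ f x`. A minimal certificate at `x`
must contain every such `i`, so `s(x) ≤ Cert(f)`. Every edge of the cube along which `f` changes
has one endpoint in `f⁻¹(0)` and one in `f⁻¹(1)`, so for either value `b`,
`2ⁿ · Inf(f) = ∑ₓ s(x) = 2 ∑_{f x = b} s(x) ≤ 2 · |f⁻¹(b)| · Cert(f)`, i.e.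
`Inf(f) ≤ 2 Cert(f) Pr[f = b]`. Choosing `b` with `Pr[f = b] ≤ 1/2` gives
`Pr[f = b] ≤ 2 Pr[f = 0] Pr[f = 1]`.
-/

open Finset

variable {ι : Type*} [Fintype ι] [DecidableEq ι]

/-- `x` with its `i`-th bit flipped. -/
def flipAt (x : ι → Bool) (i : ι) : ι → Bool := Function.update x i (!x i)

/-- `S` is a certificate for `f`'s value at `x`. -/
def IsCert (f : (ι → Bool) → Bool) (x : ι → Bool) (S : Finset ι) : Prop :=
  ∀ y : ι → Bool, (∀ i ∈ S, y i = x i) → f y = f x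

/-- Certificate complexity of `f` at `x`: minimum size of a certificate. -/
noncomputable def certAt (f : (ι → Bool) → Bool) (x : ι → Bool) : ℕ :=
  sInf {k | ∃ S : Finset ι, IsCert f x S ∧ S.card = k}

/-- Certificate complexity of `f`. -/
noncomputable def certC (f : (ι → Bool) → Bool) : ℕ :=
  sSup {k | ∃ x : ι → Bool, certAt f x = k}

/-- Influence of coordinate `i` on `f` (uniform distribution). -/
noncomputable def influence (f : (ι → Bool) → Bool) (i : ι) : ℝ :=
  ((univ.filter fun x : ι → Bool => f (flipAt x i) ≠ f x).card : ℝ) / 2 ^ Fintype.card ι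

/-- Total influence of `f`. -/
noncomputable def totalInf (f : (ι → Bool) → Bool) : ℝ := ∑ i : ι, influence f i

/-- `Pr_{x uniform}[f(x) = b]`. -/
noncomputable def probEq (f : (ι → Bool) → Bool) (b : Bool) : ℝ :=
  ((univ.filter fun x : ι → Bool => f x = b).card : ℝ) / 2 ^ Fintype.card ι

/-- Variance of `f`: `Pr[f = 0] * Pr[f = 1]`. -/
noncomputable def fvar (f : (ι → Bool) → Bool) : ℝ := probEq f false * probEq f true

omit [Fintype ι] in
lemma flipAt_flipAt (x : ι → Bool) (i : ι) : flipAt (flipAt x i) i = x := by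
  simp [flipAt]

noncomputable def sensitivity (f : (ι → Bool) → Bool) (x : ι → Bool) : ℕ :=
  #{i | f (flipAt x i) ≠ f x}

omit [DecidableEq ι] in
lemma isCert_univ (f : (ι → Bool) → Bool) (x : ι → Bool) : IsCert f x univ :=
  fun _ hy => congrArg f (funext fun i => hy i (mem_univ i))

lemma IsCert.sensitive_subset {f : (ι → Bool) → Bool} {x : ι → Bool} {S : Finset ι}
    (hS : IsCert f x S) : ({i | f (flipAt x i) ≠ f x} : Finset ι) ⊆ S := by
  intro i hi
  by_contra hiS
  refine (mem_filter.mp hi).2 (hS _ fun j hj => ?_)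
  exact Function.update_of_ne (ne_of_mem_of_not_mem hj hiS) _ _

lemma sensitivity_le_certAt (f : (ι → Bool) → Bool) (x : ι → Bool) :
    sensitivity f x ≤ certAt f x := by
  obtain ⟨S, hS, hcard⟩ := Nat.sInf_mem (s := {k | ∃ S : Finset ι, IsCert f x S ∧ S.card = k})
    ⟨_, univ, isCert_univ f x, rfl⟩
  exact (card_le_card hS.sensitive_subset).trans hcard.le

omit [DecidableEq ι] in
lemma certAt_le_card (f : (ι → Bool) → Bool) (x : ι → Bool) : certAt f x ≤ Fintype.card ι :=
  Nat.sInf_le ⟨univ, isCert_univ f x, card_univ⟩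

omit [DecidableEq ι] in
lemma certAt_le_certC (f : (ι → Bool) → Bool) (x : ι → Bool) : certAt f x ≤ certC f :=
  le_csSup ⟨Fintype.card ι, by rintro _ ⟨y, rfl⟩; exact certAt_le_card f y⟩ ⟨x, rfl⟩

/-- Every edge in direction `i` along which `f` changes has one endpoint of each value. -/
lemma card_sensitive_and_eq_not (f : (ι → Bool) → Bool) (i : ι) (b : Bool) :
    #{x | f (flipAt x i) ≠ f x ∧ f x = b} = #{x | f (flipAt x i) ≠ f x ∧ f x = !b} := by
  refine card_nbij' (flipAt · i) (flipAt · i) ?_ ?_ (fun x _ => flipAt_flipAt x i)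
    (fun x _ => flipAt_flipAt x i) <;>
  · intro x hx
    simp only [coe_filter, mem_univ, true_and, Set.mem_ofPred_eq, flipAt_flipAt] at hx ⊢
    generalize f x = u, f (flipAt x i) = v at hx ⊢
    cases u <;> cases v <;> simp_all

lemma card_sensitive_eq_two_mul (f : (ι → Bool) → Bool) (i : ι) (b : Bool) :
    #{x | f (flipAt x i) ≠ f x} = 2 * #{x | f (flipAt x i) ≠ f x ∧ f x = b} := by
  rw [← card_filter_add_card_filter_not (p := fun x => f x = b), filter_filter, filter_filter,
    two_mul, card_sensitive_and_eq_not f i b]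
  simp only [Bool.eq_not_iff]

lemma sum_card_sensitive_and_eq (f : (ι → Bool) → Bool) (b : Bool) :
    ∑ i, #{x | f (flipAt x i) ≠ f x ∧ f x = b} = ∑ x with f x = b, sensitivity f x := by
  simp only [sensitivity, card_filter, sum_filter]
  rw [sum_comm]
  refine sum_congr rfl fun x _ => ?_
  split_ifs with hx <;> simp [hx]

lemma totalInf_le_two_mul_certC_mul_probEq (f : (ι → Bool) → Bool) (b : Bool) :
    totalInf f ≤ 2 * certC f * probEq f b := by
  have hsum : ∑ x with f x = b, sensitivity f x ≤ #{x | f x = b} * certC f := by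
    simpa using sum_le_card_nsmul _ _ _ fun x _ =>
      (sensitivity_le_certAt f x).trans (certAt_le_certC f x)
  have htotal : totalInf f = 2 * (∑ x with f x = b, sensitivity f x : ℕ) / 2 ^ Fintype.card ι := by
    simp only [totalInf, influence, ← sum_div, card_sensitive_eq_two_mul f _ b]
    push_cast
    rw [← mul_sum, ← Nat.cast_sum, sum_card_sensitive_and_eq f b, Nat.cast_sum]
  rw [htotal, probEq, mul_div_assoc']
  gcongr ?_ / _
  rw [mul_assoc]
  gcongr
  exact_mod_cast hsum.trans_eq (mul_comm _ _)

lemma probEq_false_add_probEq_true (f : (ι → Bool) → Bool) :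
    probEq f false + probEq f true = 1 := by
  rw [probEq, probEq, ← add_div, div_eq_one_iff_eq (by positivity)]
  norm_cast
  rw [← Fintype.card_bool, ← Fintype.card_fun, ← card_univ,
    ← card_filter_add_card_filter_not (s := univ) (p := fun x => f x = false)]
  simp

lemma exists_probEq_le_two_mul_fvar (f : (ι → Bool) → Bool) :
    ∃ b, probEq f b ≤ 2 * fvar f := by
  have h0 : 0 ≤ probEq f false := by unfold probEq; positivity
  have h1 : 0 ≤ probEq f true := by unfold probEq; positivity
  have hsum := probEq_false_add_probEq_true f
  rcases le_total (probEq f false) (probEq f true) with h | h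
  · exact ⟨false, by unfold fvar; nlinarith⟩
  · exact ⟨true, by unfold fvar; nlinarith⟩

theorem stmt4 {ι : Type*} [Fintype ι] [DecidableEq ι] (f : (ι → Bool) → Bool) :
    totalInf f ≤ 4 * fvar f * certC f := by
  obtain ⟨b, hb⟩ := exists_probEq_le_two_mul_fvar f
  calc totalInf f ≤ 2 * certC f * probEq f b := totalInf_le_two_mul_certC_mul_probEq f b
    _ ≤ 2 * certC f * (2 * fvar f) := by gcongr
    _ = 4 * fvar f * certC f := by ring
end

section
/- Granularity of variance: if f : {0,1}^n → {0,1} has certificate complexity at most k and Var(f) < 2^{-k} − 2^{-2k}, then f is constant (Var(f) = 0). -/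
open Finset

variable {ι : Type*} [Fintype ι] [DecidableEq ι]

omit [DecidableEq ι] in
lemma exists_isCert_card_eq_certAt (f : (ι → Bool) → Bool) (x : ι → Bool) :
    ∃ S : Finset ι, IsCert f x S ∧ #S = certAt f x :=
  Nat.sInf_mem (s := {k | ∃ S : Finset ι, IsCert f x S ∧ #S = k})
    ⟨_, univ, isCert_univ f x, rfl⟩

lemma card_filter_forall_mem_eq {α : Type*} [Fintype α] [DecidableEq α] (x : ι → α)
    (S : Finset ι) :
    #(univ.filter fun y : ι → α => ∀ i ∈ S, y i = x i) = Fintype.card α ^ #Sᶜ := by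
  have hcube : (univ.filter fun y : ι → α => ∀ i ∈ S, y i = x i) =
      Fintype.piFinset fun i => if i ∈ S then {x i} else univ := by
    ext y
    simp only [mem_filter, mem_univ, true_and, Fintype.mem_piFinset]
    refine forall_congr' fun i => ?_
    split_ifs with hi <;> simp [hi]
  rw [hcube, Fintype.card_piFinset, ← prod_const, ← univ_inter Sᶜ, ← prod_ite_mem]
  refine prod_congr rfl fun i _ => ?_
  by_cases hi : i ∈ S <;> simp [hi]

lemma IsCert.one_div_two_pow_card_le_probEq {f : (ι → Bool) → Bool} {x : ι → Bool}
    {S : Finset ι} (hS : IsCert f x S) : 1 / 2 ^ #S ≤ probEq f (f x) := by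
  have hcube : 2 ^ #Sᶜ ≤ #(univ.filter fun y : ι → Bool => f y = f x) := by
    rw [← Fintype.card_bool, ← card_filter_forall_mem_eq x S]
    exact card_le_card (monotone_filter_right _ fun y _ hy => hS y hy)
  calc (1 : ℝ) / 2 ^ #S = 2 ^ #Sᶜ / 2 ^ Fintype.card ι := by
        rw [← card_compl_add_card S, pow_add]
        field_simp
    _ ≤ probEq f (f x) := by
        rw [probEq]
        gcongr
        exact_mod_cast hcube

lemma one_div_two_pow_le_probEq {f : (ι → Bool) → Bool} {k : ℕ} (hk : certC f ≤ k)
    (x : ι → Bool) : 1 / 2 ^ k ≤ probEq f (f x) := by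
  obtain ⟨S, hS, hcard⟩ := exists_isCert_card_eq_certAt f x
  calc 1 / 2 ^ k ≤ (1 : ℝ) / 2 ^ #S :=
        one_div_pow_le_one_div_pow_of_le one_le_two (hcard ▸ (certAt_le_certC f x).trans hk)
    _ ≤ probEq f (f x) := hS.one_div_two_pow_card_le_probEq

lemma probEq_add_probEq_not (f : (ι → Bool) → Bool) (b : Bool) :
    probEq f b + probEq f (!b) = 1 := by
  have hcount : #(univ.filter fun x : ι → Bool => f x = b) +
      #(univ.filter fun x : ι → Bool => f x = !b) = 2 ^ Fintype.card ι := by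
    rw [← Fintype.card_bool, ← Fintype.card_fun, ← card_univ,
      ← card_filter_add_card_filter_not (s := univ) (p := fun x => f x = b)]
    simp [Bool.eq_not_iff]
  rw [probEq, probEq, ← add_div, ← Nat.cast_add, hcount]
  simp

lemma fvar_eq_probEq_mul_probEq_not (f : (ι → Bool) → Bool) (b : Bool) :
    fvar f = probEq f b * probEq f (!b) := by
  cases b
  · rfl
  · exact mul_comm _ _

lemma probEq_eq_zero {f : (ι → Bool) → Bool} {b : Bool} (h : ∀ x, f x ≠ b) :
    probEq f b = 0 := by
  simp [probEq, filter_false_of_mem fun x _ => h x]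

lemma fvar_eq_zero_of_forall_eq {f : (ι → Bool) → Bool} (h : ∀ x y, f x = f y) : fvar f = 0 := by
  rw [fvar_eq_probEq_mul_probEq_not f (f default),
    probEq_eq_zero (b := !f default) fun y => by simp [h y default], mul_zero]

lemma sub_sq_le_mul_of_add_eq_one {R : Type*} [CommRing R] [LinearOrder R]
    [IsStrictOrderedRing R]
    {a p q : R} (hp : a ≤ p) (hq : a ≤ q) (hpq : p + q = 1) : a - a ^ 2 ≤ p * q := by
  nlinarith [mul_nonneg (sub_nonneg.2 hp) (sub_nonneg.2 hq)]

theorem stmt7 {ι : Type*} [Fintype ι] [DecidableEq ι] (f : (ι → Bool) → Bool) (k : ℕ)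
    (hk : certC f ≤ k) (hvar : fvar f < 1 / 2 ^ k - 1 / 2 ^ (2 * k)) :
    fvar f = 0 ∧ ∀ x y : ι → Bool, f x = f y := by
  have hconst : ∀ x y : ι → Bool, f x = f y := by
    intro x y
    by_contra hxy
    have hpx := one_div_two_pow_le_probEq hk x
    have hpy := one_div_two_pow_le_probEq hk y
    rw [Bool.eq_not_of_ne (Ne.symm hxy)] at hpy
    have hlow := sub_sq_le_mul_of_add_eq_one hpx hpy (probEq_add_probEq_not f (f x))
    have hsq : (1 : ℝ) / 2 ^ (2 * k) = (1 / 2 ^ k) ^ 2 := by ring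
    rw [← fvar_eq_probEq_mul_probEq_not] at hlow
    linarith
  exact ⟨fvar_eq_zero_of_forall_eq hconst, hconst⟩
end

section
/- Hardness reduction soundness: let C : {0,1}^n × {0,1}^n → {0,1} be a co-nondeterministic circuit accepting a nonempty monotone set (C accepts x iff C(x,y)=1 for all y, and the accepted set is upward-closed and nonempty), let D : {0,1}^m → {0,1}^n be a zero-error bit-fixing disperser with entropy threshold λ, and define f(x,z) = C(x, D(z)). If every x accepted by C has more than k' ones, then every certificate S for f's value at (1^n, 1^m) has |S| > min{k', m − λ}. -/
open Finset

variable {ι : Type*} [Fintype ι] [DecidableEq ι]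

theorem stmt17 (n m lam k' : ℕ) (C : (Fin n → Bool) → (Fin n → Bool) → Bool)
    (hne : ∃ x : Fin n → Bool, ∀ y, C x y = true)
    (hmono : ∀ x x' : Fin n → Bool, (∀ y, C x y = true) → (∀ i, x i ≤ x' i) →
      ∀ y, C x' y = true)
    (D : (Fin m → Bool) → Fin n → Bool)
    (hD : ∀ S : Finset (Fin m), S.card ≤ m - lam → ∀ u : Fin m → Bool, ∀ y : Fin n → Bool,
      ∃ z : Fin m → Bool, (∀ i ∈ S, z i = u i) ∧ D z = y)
    (hk' : ∀ x : Fin n → Bool, (∀ y, C x y = true) →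
      k' < (univ.filter fun i => x i = true).card) :
    ∀ S : Finset (Fin n ⊕ Fin m),
      IsCert (fun w : Fin n ⊕ Fin m → Bool =>
          C (fun i => w (Sum.inl i)) (D fun j => w (Sum.inr j)))
        (fun _ => true) S →
      min k' (m - lam) < S.card := by
  intro S hS
  by_contra hle
  push_neg at hle
  set Sx : Finset (Fin n) := univ.filter (fun i => Sum.inl i ∈ S) with hSx
  set Sz : Finset (Fin m) := univ.filter (fun j => Sum.inr j ∈ S) with hSz
  have hSxcard : Sx.card ≤ S.card := by
    apply Finset.card_le_card_of_injOn (fun i => Sum.inl i)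
    · intro i hi; simpa [hSx] using hi
    · intro a _ b _ h; exact Sum.inl.inj h
  have hSzcard : Sz.card ≤ S.card := by
    apply Finset.card_le_card_of_injOn (fun j => Sum.inr j)
    · intro j hj; simpa [hSz] using hj
    · intro a _ b _ h; exact Sum.inr.inj h
  have hSx_le : Sx.card ≤ k' := le_trans hSxcard (le_trans hle (min_le_left _ _))
  have hSz_le : Sz.card ≤ m - lam := le_trans hSzcard (le_trans hle (min_le_right _ _))
  -- f at all-true is true
  obtain ⟨x0, hx0⟩ := hne
  have hall : ∀ y, C (fun _ => true) y = true :=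
    hmono x0 _ hx0 (fun i => by simp)
  -- indicator of Sx is accepted
  set xs : Fin n → Bool := fun i => decide (i ∈ Sx) with hxs
  have haccept : ∀ y, C xs y = true := by
    intro y
    obtain ⟨z, hz, hDz⟩ := hD Sz hSz_le (fun _ => true) y
    have := hS (Sum.elim xs z) ?_
    · simpa [hDz, hall] using this
    · intro i hi
      cases i with
      | inl i =>
          simp only [Sum.elim_inl, hxs]
          simp [hSx, hi]
      | inr j =>
          simpa using hz j (by simp [hSz, hi])
  have hlt := hk' xs haccept
  have : (univ.filter fun i => xs i = true) = Sx := by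
    ext i; simp [hxs]
  rw [this] at hlt
  omega
end
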